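/- arXiv:1812.05927 — 3 statements merged into one kernel-verified Lean document; each statement's English description precedes it below -/
import Mathlib

section
/- Let γ > 1, κ > 0 and ρ̄ > 0. Then the function θ₂ : (0,∞) → ℝ defined by θ₂(ρ) = (2√(κγ)/(γ−1))·ρ·(ρ^{(γ−1)/2} − ρ̄^{(γ−1)/2}) for ρ ≤ ρ̄ (rarefaction branch) and θ₂(ρ) = √((ρ/ρ̄)·(ρ − ρ̄)·(κρ^γ − κρ̄^γ)) for ρ > ρ̄ (shock branch) is continuously differentiable on (0,∞), and its derivative at ρ̄ equals c̄ = √(κγρ̄^{γ−1}). -/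
/-!
For `ρ > ρ̄` the radicand of the shock branch is `(ρ - ρ̄)² · (ρ / ρ̄) κ s(ρ)`, where
`s = dslope (· ^ γ) ρ̄` is the difference quotient of `ρ ↦ ρ ^ γ` at `ρ̄`, extended by `γ ρ̄ ^ (γ - 1)`.
Since `ρ ↦ ρ ^ γ` is analytic on `(0, ∞)`, so is `s`, and `s > 0` there; hence the shock branch
extends to the `C¹` function `(ρ - ρ̄) √((ρ / ρ̄) κ s(ρ))` on `(0, ∞)`, whose derivative at `ρ̄` is
`√(κ γ ρ̄ ^ (γ - 1)) = c̄`. The rarefaction branch is smooth on `(0, ∞)` and also vanishes with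
derivative `c̄` at `ρ̄`, and two `C¹` functions that agree to first order at `ρ̄` glue to a `C¹`
function.
-/

open Set Filter Topology

theorem hasDerivAt_ite_le {F : Type*} [NormedAddCommGroup F] [NormedSpace ℝ F] {f g : ℝ → F}
    {a : ℝ} {d : F} (hf : HasDerivAt f d a) (hg : HasDerivAt g d a) (hfg : f a = g a) :
    HasDerivAt (fun x => if x ≤ a then f x else g x) d a := by
  have hleft : HasDerivWithinAt (fun x => if x ≤ a then f x else g x) d (Iic a) a :=
    hf.hasDerivWithinAt.congr (fun x hx => if_pos hx) (if_pos le_rfl)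
  have hright : HasDerivWithinAt (fun x => if x ≤ a then f x else g x) d (Ici a) a := by
    refine hg.hasDerivWithinAt.congr (fun x hx => ?_) (by simp [hfg])
    rcases (mem_Ici.1 hx).eq_or_lt with rfl | hlt
    · simp [hfg]
    · exact if_neg hlt.not_ge
  simpa [Iic_union_Ici] using hleft.union hright

theorem ContDiffOn.ite_le {F : Type*} [NormedAddCommGroup F] [NormedSpace ℝ F] {f g : ℝ → F}
    {s : Set ℝ} {a : ℝ} {d : F} (hs : IsOpen s) (hf : ContDiffOn ℝ 1 f s) (hg : ContDiffOn ℝ 1 g s)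
    (hfg : f a = g a) (hfa : HasDerivAt f d a) (hga : HasDerivAt g d a) :
    ContDiffOn ℝ 1 (fun x => if x ≤ a then f x else g x) s := by
  have hderiv : ∀ x ∈ s,
      HasDerivAt (fun x => if x ≤ a then f x else g x) (if x ≤ a then deriv f x else deriv g x) x := by
    intro x hx
    rcases lt_trichotomy x a with hlt | rfl | hgt
    · have hev : f =ᶠ[𝓝 x] fun x => if x ≤ a then f x else g x :=
        eventually_of_mem (Iic_mem_nhds hlt) fun y hy => (if_pos hy).symm
      rw [if_pos hlt.le]
      exact ((hf.differentiableOn one_ne_zero).differentiableAt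
        (hs.mem_nhds hx)).hasDerivAt.congr_of_eventuallyEq hev.symm
    · rw [if_pos le_rfl, hfa.deriv]
      exact hasDerivAt_ite_le hfa hga hfg
    · have hev : g =ᶠ[𝓝 x] fun x => if x ≤ a then f x else g x :=
        eventually_of_mem (Ioi_mem_nhds hgt) fun y hy => (if_neg (not_le.2 hy)).symm
      rw [if_neg (not_le.2 hgt)]
      exact ((hg.differentiableOn one_ne_zero).differentiableAt
        (hs.mem_nhds hx)).hasDerivAt.congr_of_eventuallyEq hev.symm
  have hcont : ContinuousOn (fun x => if x ≤ a then deriv f x else deriv g x) s := by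
    refine ContinuousOn.if (fun x hx => ?_) ((hf.continuousOn_deriv_of_isOpen hs le_rfl).mono
      inter_subset_left) ((hg.continuousOn_deriv_of_isOpen hs le_rfl).mono inter_subset_left)
    obtain rfl : x = a := frontier_le_subset_eq continuous_id continuous_const hx.2
    rw [hfa.deriv, hga.deriv]
  rw [show (1 : WithTop ℕ∞) = 0 + 1 from rfl, contDiffOn_succ_iff_deriv_of_isOpen hs]
  refine ⟨fun x hx => (hderiv x hx).differentiableAt.differentiableWithinAt, by simp, ?_⟩
  exact contDiffOn_zero.2 (hcont.congr fun x hx => (hderiv x hx).deriv)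

theorem AnalyticOnNhd.dslope {𝕜 E : Type*} [NontriviallyNormedField 𝕜] [NormedAddCommGroup E]
    [NormedSpace 𝕜 E] {f : 𝕜 → E} {s : Set 𝕜} (hf : AnalyticOnNhd 𝕜 f s) (a : 𝕜) :
    AnalyticOnNhd 𝕜 (dslope f a) s := by
  intro x hx
  rcases eq_or_ne x a with rfl | hxa
  · obtain ⟨p, hp⟩ := hf x hx
    exact ⟨_, hp.has_fpower_series_dslope_fslope⟩
  · have hslope : AnalyticAt 𝕜 (fun y => (y - a)⁻¹ • (f y - f a)) x :=
      ((analyticAt_id.sub analyticAt_const).inv (sub_ne_zero.2 hxa)).smul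
        ((hf x hx).sub analyticAt_const)
    exact hslope.congr (dslope_eventuallyEq_slope_of_ne f hxa).symm

theorem Real.analyticOnNhd_rpow_const (γ : ℝ) : AnalyticOnNhd ℝ (fun x : ℝ => x ^ γ) (Ioi 0) := by
  intro x hx
  have hev : (fun y => Real.exp (Real.log y * γ)) =ᶠ[𝓝 x] fun y : ℝ => y ^ γ :=
    eventually_of_mem (Ioi_mem_nhds hx) fun y hy => (Real.rpow_def_of_pos hy γ).symm
  exact (((analyticAt_log hx).mul analyticAt_const).rexp').congr hev

theorem hasDerivAt_sub_smul_of_continuousAt {𝕜 F : Type*} [NontriviallyNormedField 𝕜]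
    [NormedAddCommGroup F] [NormedSpace 𝕜 F] {h : 𝕜 → F} {a : 𝕜} (hh : ContinuousAt h a) :
    HasDerivAt (fun x => (x - a) • h x) (h a) a := by
  rw [hasDerivAt_iff_tendsto_slope]
  refine (hh.tendsto.mono_left nhdsWithin_le_nhds).congr' ?_
  filter_upwards [self_mem_nhdsWithin] with x hx
  rw [slope_def_module, sub_self, zero_smul, sub_zero, smul_smul,
    inv_mul_cancel₀ (sub_ne_zero.2 hx), one_smul]

noncomputable def rarefactionBranch (κ γ ρbar ρ : ℝ) : ℝ :=
  2 * √(κ * γ) / (γ - 1) * ρ * (ρ ^ ((γ - 1) / 2) - ρbar ^ ((γ - 1) / 2))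

noncomputable def shockBranch (κ γ ρbar ρ : ℝ) : ℝ :=
  (ρ - ρbar) * √(ρ / ρbar * κ * dslope (fun x => x ^ γ) ρbar ρ)

section Branches

variable {κ γ ρbar : ℝ}

theorem contDiffOn_rarefactionBranch {n : WithTop ℕ∞} :
    ContDiffOn ℝ n (rarefactionBranch κ γ ρbar) (Ioi 0) := fun _ hx =>
  (contDiffAt_const.mul contDiffAt_id |>.mul
    ((Real.contDiffAt_rpow_const_of_ne (ne_of_gt hx)).sub contDiffAt_const)).contDiffWithinAt

theorem hasDerivAt_rarefactionBranch (hγ : γ ≠ 1) (hρbar : 0 < ρbar) :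
    HasDerivAt (rarefactionBranch κ γ ρbar) √(κ * γ * ρbar ^ (γ - 1)) ρbar := by
  have hpow : HasDerivAt (fun x : ℝ => x ^ ((γ - 1) / 2))
      ((γ - 1) / 2 * ρbar ^ ((γ - 1) / 2 - 1)) ρbar :=
    Real.hasDerivAt_rpow_const (Or.inl hρbar.ne')
  have hprod := ((hasDerivAt_id' ρbar).const_mul (2 * √(κ * γ) / (γ - 1))).mul
    (hpow.sub_const (ρbar ^ ((γ - 1) / 2)))
  refine hprod.congr_deriv ?_
  have hsqrt : ρbar ^ ((γ - 1) / 2) = √(ρbar ^ (γ - 1)) := by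
    rw [Real.sqrt_eq_rpow, ← Real.rpow_mul hρbar.le]
    ring_nf
  have hγ1 : γ - 1 ≠ 0 := sub_ne_zero.2 hγ
  rw [Real.sqrt_mul' (κ * γ) (Real.rpow_nonneg hρbar.le _), ← hsqrt,
    Real.rpow_sub_one hρbar.ne']
  field_simp
  ring

theorem dslope_rpow_const_pos (hγ : 0 < γ) {a x : ℝ} (ha : 0 < a) (hx : 0 < x) :
    0 < dslope (fun x => x ^ γ) a x := by
  rcases lt_trichotomy x a with hlt | rfl | hgt
  · rw [dslope_of_ne _ hlt.ne, slope_def_field]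
    exact div_pos_of_neg_of_neg (sub_neg.2 (Real.rpow_lt_rpow hx.le hlt hγ)) (sub_neg.2 hlt)
  · rw [dslope_same, (Real.hasDerivAt_rpow_const (Or.inl hx.ne')).deriv]
    positivity
  · rw [dslope_of_ne _ hgt.ne', slope_def_field]
    exact div_pos (sub_pos.2 (Real.rpow_lt_rpow ha.le hgt hγ)) (sub_pos.2 hgt)

theorem contDiffOn_shockBranch {n : WithTop ℕ∞} (hκ : 0 < κ) (hγ : 0 < γ) (hρbar : 0 < ρbar) :
    ContDiffOn ℝ n (shockBranch κ γ ρbar) (Ioi 0) := by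
  have hslope : ContDiffOn ℝ n (dslope (fun x : ℝ => x ^ γ) ρbar) (Ioi 0) :=
    ((Real.analyticOnNhd_rpow_const γ).dslope ρbar).contDiffOn isOpen_Ioi.uniqueDiffOn
  intro x (hx : 0 < x)
  have harg : ContDiffAt ℝ n (fun x => x / ρbar * κ * dslope (fun x => x ^ γ) ρbar x) x :=
    ((contDiffAt_id.div_const ρbar).mul contDiffAt_const).mul
      (hslope.contDiffAt (Ioi_mem_nhds hx))
  have hpos : 0 < x / ρbar * κ * dslope (fun x => x ^ γ) ρbar x := by
    have := dslope_rpow_const_pos hγ hρbar hx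
    positivity
  exact ((contDiffAt_id.sub contDiffAt_const).mul (harg.sqrt hpos.ne')).contDiffWithinAt

theorem hasDerivAt_shockBranch (hρbar : 0 < ρbar) :
    HasDerivAt (shockBranch κ γ ρbar) √(κ * γ * ρbar ^ (γ - 1)) ρbar := by
  have hpow : HasDerivAt (fun x : ℝ => x ^ γ) (γ * ρbar ^ (γ - 1)) ρbar :=
    Real.hasDerivAt_rpow_const (Or.inl hρbar.ne')
  have hcont : ContinuousAt (fun x => √(x / ρbar * κ * dslope (fun x => x ^ γ) ρbar x)) ρbar :=
    (((continuousAt_id.div_const ρbar).mul continuousAt_const).mul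
      (continuousAt_dslope_same.2 hpow.differentiableAt)).sqrt
  refine (hasDerivAt_sub_smul_of_continuousAt hcont).congr_deriv ?_
  rw [dslope_same, hpow.deriv, div_self hρbar.ne']
  ring_nf

theorem shockBranch_eq {ρ : ℝ} (hρ : ρbar < ρ) :
    shockBranch κ γ ρbar ρ = √((ρ / ρbar) * (ρ - ρbar) * (κ * ρ ^ γ - κ * ρbar ^ γ)) := by
  have hsub : 0 < ρ - ρbar := sub_pos.2 hρ
  have hfactor : (ρ / ρbar) * (ρ - ρbar) * (κ * ρ ^ γ - κ * ρbar ^ γ) =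
      ρ / ρbar * κ * dslope (fun x => x ^ γ) ρbar ρ * (ρ - ρbar) ^ 2 := by
    rw [dslope_of_ne _ hρ.ne', slope_def_field]
    field_simp
  rw [hfactor, Real.sqrt_mul' _ (sq_nonneg _), Real.sqrt_sq hsub.le, shockBranch, mul_comm]

end Branches

/-- The piecewise function θ₂ of model M2 is continuously
differentiable on (0,∞), and its derivative at ρ̄ equals the sound speed c̄. -/
theorem theta2_contDiffOn_and_deriv
    (γ κ ρbar cbar : ℝ) (hγ : 1 < γ) (hκ : 0 < κ) (hρbar : 0 < ρbar)
    (hc : cbar = Real.sqrt (κ * γ * ρbar ^ (γ - 1)))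
    (θ₂ : ℝ → ℝ)
    (hθ : ∀ ρ : ℝ, θ₂ ρ =
      if ρ ≤ ρbar then
        (2 * Real.sqrt (κ * γ) / (γ - 1)) * ρ * (ρ ^ ((γ - 1) / 2) - ρbar ^ ((γ - 1) / 2))
      else Real.sqrt ((ρ / ρbar) * (ρ - ρbar) * (κ * ρ ^ γ - κ * ρbar ^ γ))) :
    ContDiffOn ℝ 1 θ₂ (Set.Ioi (0 : ℝ)) ∧ HasDerivAt θ₂ cbar ρbar := by
  have hθ_eq : θ₂ = fun ρ =>
      if ρ ≤ ρbar then rarefactionBranch κ γ ρbar ρ else shockBranch κ γ ρbar ρ := by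
    funext ρ
    rw [hθ]
    split_ifs with hρ
    · rfl
    · exact (shockBranch_eq (not_le.1 hρ)).symm
  have hbranches : rarefactionBranch κ γ ρbar ρbar = shockBranch κ γ ρbar ρbar := by
    simp [rarefactionBranch, shockBranch]
  have hrare := hasDerivAt_rarefactionBranch (κ := κ) hγ.ne' hρbar
  have hshock := hasDerivAt_shockBranch (κ := κ) (γ := γ) hρbar
  subst hθ_eq hc
  exact ⟨contDiffOn_rarefactionBranch.ite_le isOpen_Ioi
      (contDiffOn_shockBranch hκ (zero_lt_one.trans hγ) hρbar) hbranches hrare hshock,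
    hasDerivAt_ite_le hrare hshock hbranches⟩
end

section
/- Let γ > 1, p̄ > 0, ρ̄ > 0, ū ∈ ℝ, c̄ = √(γp̄/ρ̄) and μ² = (γ−1)/(γ+1). Define φ and ψ on (0,∞) by φ(σ) = ρ̄(σ/p̄)^{1/γ} for σ ≤ p̄, φ(σ) = ρ̄(σ + μ²p̄)/(μ²σ + p̄) for σ > p̄, and ψ(σ) = (2c̄/(γ−1))((σ/p̄)^{(γ−1)/(2γ)} − 1) for σ ≤ p̄, ψ(σ) = (σ − p̄)√((1−μ²)/(ρ̄(σ + μ²p̄))) for σ > p̄. Then the mass flux along the 3-Lax curve, q(σ) = φ(σ)·(ū + ψ(σ)), is differentiable at σ = p̄ with q'(p̄) = (ū + c̄)/c̄². -/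
/-- The mass flux q(σ) = φ(σ)(ū + ψ(σ)) along the 3-Lax curve of
the polytropic Euler equations is differentiable at σ = p̄ with derivative (ū + c̄)/c̄². -/
theorem massflux_deriv_along_lax3
    (γ pbar ρbar ubar c μsq : ℝ) (hγ : 1 < γ) (hpbar : 0 < pbar) (hρbar : 0 < ρbar)
    (hc : c = Real.sqrt (γ * pbar / ρbar)) (hμ : μsq = (γ - 1) / (γ + 1))
    (φ ψ : ℝ → ℝ)
    (hφ : ∀ σ : ℝ, φ σ =
      if σ ≤ pbar then ρbar * (σ / pbar) ^ (1 / γ)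
      else ρbar * (σ + μsq * pbar) / (μsq * σ + pbar))
    (hψ : ∀ σ : ℝ, ψ σ =
      if σ ≤ pbar then (2 * c / (γ - 1)) * ((σ / pbar) ^ ((γ - 1) / (2 * γ)) - 1)
      else (σ - pbar) * Real.sqrt ((1 - μsq) / (ρbar * (σ + μsq * pbar)))) :
    HasDerivAt (fun σ => φ σ * (ubar + ψ σ)) ((ubar + c) / c ^ 2) pbar := by
  have hγ0 : (0:ℝ) < γ := lt_trans one_pos hγ
  have hγ1 : (0:ℝ) < γ - 1 := by linarith
  have hγp1 : (0:ℝ) < γ + 1 := by linarith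
  have hμpos : 0 < μsq := by rw [hμ]; positivity
  have hcpos : 0 < c := by rw [hc]; exact Real.sqrt_pos.2 (by positivity)
  have hc2 : c ^ 2 = γ * pbar / ρbar := by rw [hc, Real.sq_sqrt (by positivity)]
  have hpp : pbar / pbar = 1 := div_self hpbar.ne'
  -- derivative of σ/pbar
  have hg : HasDerivAt (fun σ : ℝ => σ / pbar) (1 / pbar) pbar := by
    simpa using (hasDerivAt_id pbar).div_const pbar
  -- left branch function
  have hA : HasDerivAt (fun σ : ℝ => (σ / pbar) ^ (1 / γ))
      (1 / pbar * (1 / γ) * (pbar / pbar) ^ (1 / γ - 1)) pbar :=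
    hg.rpow_const (Or.inl (by rw [hpp]; norm_num))
  have hB : HasDerivAt (fun σ : ℝ => (σ / pbar) ^ ((γ - 1) / (2 * γ)))
      (1 / pbar * ((γ - 1) / (2 * γ)) * (pbar / pbar) ^ ((γ - 1) / (2 * γ) - 1)) pbar :=
    hg.rpow_const (Or.inl (by rw [hpp]; norm_num))
  have hf1 : HasDerivAt
      (fun σ : ℝ => ρbar * (σ / pbar) ^ (1 / γ) *
        (ubar + 2 * c / (γ - 1) * ((σ / pbar) ^ ((γ - 1) / (2 * γ)) - 1)))
      ((ubar + c) / c ^ 2) pbar := by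
    have h := (hA.const_mul ρbar).mul
      ((((hB.sub_const 1)).const_mul (2 * c / (γ - 1))).const_add ubar)
    convert h using 1
    · rfl
    · rfl
    · rfl
    rw [hc2]
    simp only [hpp, Real.one_rpow]
    field_simp
    ring
  -- right branch function
  have hdne : μsq * pbar + pbar ≠ 0 := by positivity
  have hwne : ρbar * (pbar + μsq * pbar) ≠ 0 := by positivity
  have hnum : HasDerivAt (fun σ : ℝ => ρbar * (σ + μsq * pbar)) ρbar pbar := by
    simpa using ((hasDerivAt_id pbar).add_const (μsq * pbar)).const_mul ρbar
  have hden : HasDerivAt (fun σ : ℝ => μsq * σ + pbar) μsq pbar := by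
    simpa using ((hasDerivAt_id pbar).const_mul μsq).add_const pbar
  have hφ2 : HasDerivAt (fun σ : ℝ => ρbar * (σ + μsq * pbar) / (μsq * σ + pbar))
      ((ρbar * (μsq * pbar + pbar) - ρbar * (pbar + μsq * pbar) * μsq)
        / (μsq * pbar + pbar) ^ 2) pbar := hnum.div hden hdne
  have hinner : HasDerivAt (fun σ : ℝ => (1 - μsq) / (ρbar * (σ + μsq * pbar)))
      ((0 * (ρbar * (pbar + μsq * pbar)) - (1 - μsq) * ρbar)
        / (ρbar * (pbar + μsq * pbar)) ^ 2) pbar :=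
    (hasDerivAt_const pbar (1 - μsq)).div hnum hwne
  have hμlt : μsq < 1 := by rw [hμ, div_lt_one hγp1]; linarith
  have hvpos : 0 < (1 - μsq) / (ρbar * (pbar + μsq * pbar)) := by
    apply div_pos (by linarith) (by positivity)
  have hS : HasDerivAt (fun σ : ℝ => Real.sqrt ((1 - μsq) / (ρbar * (σ + μsq * pbar))))
      (((0 * (ρbar * (pbar + μsq * pbar)) - (1 - μsq) * ρbar)
        / (ρbar * (pbar + μsq * pbar)) ^ 2)
        / (2 * Real.sqrt ((1 - μsq) / (ρbar * (pbar + μsq * pbar))))) pbar :=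
    hinner.sqrt hvpos.ne'
  have hψ2 := ((hasDerivAt_id pbar).sub_const pbar).mul hS
  have hsv : Real.sqrt ((1 - μsq) / (ρbar * (pbar + μsq * pbar))) = c / (γ * pbar) := by
    have hv_eq : (1 - μsq) / (ρbar * (pbar + μsq * pbar)) = (c / (γ * pbar)) ^ 2 := by
      rw [div_pow, hc2, hμ]
      field_simp
      ring
    rw [hv_eq, Real.sqrt_sq (by positivity)]
  have hf2 : HasDerivAt
      (fun σ : ℝ => ρbar * (σ + μsq * pbar) / (μsq * σ + pbar) *
        (ubar + (σ - pbar) * Real.sqrt ((1 - μsq) / (ρbar * (σ + μsq * pbar)))))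
      ((ubar + c) / c ^ 2) pbar := by
    have h := hφ2.mul (hψ2.const_add ubar)
    convert h using 1
    · rfl
    · rfl
    · rfl
    simp only [Pi.mul_apply, id_eq, sub_self, zero_mul, mul_zero, add_zero, one_mul, hsv]
    rw [hc2, hμ]
    field_simp
    ring
  -- combine
  have h1 : HasDerivWithinAt (fun σ => φ σ * (ubar + ψ σ)) ((ubar + c) / c ^ 2)
      (Set.Iic pbar) pbar := by
    refine hf1.hasDerivWithinAt.congr (fun σ hσ => ?_) ?_
    · rw [hφ, hψ, if_pos (show σ ≤ pbar from hσ), if_pos (show σ ≤ pbar from hσ)]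
    · rw [hφ, hψ, if_pos le_rfl, if_pos le_rfl]
  have hq_pbar : φ pbar * (ubar + ψ pbar) =
      ρbar * (pbar + μsq * pbar) / (μsq * pbar + pbar) *
        (ubar + (pbar - pbar) * Real.sqrt ((1 - μsq) / (ρbar * (pbar + μsq * pbar)))) := by
    rw [hφ, hψ, if_pos le_rfl, if_pos le_rfl]
    simp only [hpp, Real.one_rpow, sub_self, zero_mul, mul_zero, add_zero]
    field_simp [hdne]
    ring
  have h2 : HasDerivWithinAt (fun σ => φ σ * (ubar + ψ σ)) ((ubar + c) / c ^ 2)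
      (Set.Ici pbar) pbar := by
    refine hf2.hasDerivWithinAt.congr (fun σ hσ => ?_) hq_pbar
    rcases eq_or_lt_of_le (Set.mem_Ici.mp hσ) with h | h
    · rw [← h]; exact hq_pbar
    · rw [hφ, hψ, if_neg (not_le.2 h), if_neg (not_le.2 h)]
  have := h1.union h2
  rw [Set.Iic_union_Ici] at this
  exact this.hasDerivAt Filter.univ_mem
end

section
/- Let γ > 1, c_v > 0, s₀ ∈ ℝ, p̄ > 0, ρ̄ > 0 and μ² = (γ−1)/(γ+1). With φ the piecewise density function of the 3-Lax curve, i.e. φ(σ) = ρ̄(σ/p̄)^{1/γ} for σ ≤ p̄ and φ(σ) = ρ̄(σ + μ²p̄)/(μ²σ + p̄) for σ > p̄, the specific entropy along the 3-Lax curve, s(σ) = c_v·ln(σ/φ(σ)^γ) + s₀, is differentiable at σ = p̄ with s'(p̄) = 0. -/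
/-!
On the rarefaction branch σ / φ(σ)^γ = p̄ / ρ̄^γ is constant (the branch is the isentrope through
(p̄, ρ̄)), so the entropy has left derivative 0 at p̄. On the shock branch
log (σ / φ(σ)^γ) = log σ - γ (log ρ̄ + log ((σ + μ²p̄) / (μ²σ + p̄))), and the Hugoniot ratio has
logarithmic derivative (1 - μ²) / ((1 + μ²) p̄) = 1 / (γ p̄) at p̄, which cancels the 1 / p̄ coming
from log σ. Both branches give φ(p̄) = ρ̄, so the two one-sided derivatives glue.
-/

open Real Filter Topology Set

theorem hasDerivAt_of_eventuallyEq_Iic_Ici {f g h : ℝ → ℝ} {f' a : ℝ}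
    (hg : HasDerivAt g f' a) (hh : HasDerivAt h f' a)
    (hfg : f =ᶠ[𝓝[≤] a] g) (hfh : f =ᶠ[𝓝[≥] a] h) : HasDerivAt f f' a := by
  have hleft := hg.hasDerivWithinAt.congr_of_eventuallyEq hfg (hfg.eq_of_nhdsWithin self_mem_Iic)
  have hright := hh.hasDerivWithinAt.congr_of_eventuallyEq hfh (hfh.eq_of_nhdsWithin self_mem_Ici)
  simpa only [Iic_union_Ici, hasDerivWithinAt_univ] using hleft.union hright

theorem log_div_rpow {p ρ : ℝ} (γ : ℝ) (hp : 0 < p) (hρ : 0 < ρ) :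
    log (p / ρ ^ γ) = log p - γ * log ρ := by
  rw [log_div hp.ne' (rpow_pos_of_pos hρ γ).ne', log_rpow hρ]

theorem rarefaction_isentropic {γ pbar ρbar σ : ℝ} (hγ : γ ≠ 0) (hpbar : 0 < pbar)
    (hρbar : 0 ≤ ρbar) (hσ : 0 < σ) :
    σ / (ρbar * (σ / pbar) ^ (1 / γ)) ^ γ = pbar / ρbar ^ γ := by
  have hratio : 0 ≤ σ / pbar := (div_pos hσ hpbar).le
  rw [mul_rpow hρbar (rpow_nonneg hratio _), one_div, rpow_inv_rpow hratio hγ]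
  field_simp

theorem hasDerivAt_log_hugoniot_ratio {m p : ℝ} (h : (1 + m) * p ≠ 0) :
    HasDerivAt (fun σ => log ((σ + m * p) / (m * σ + p))) ((1 - m) / ((1 + m) * p)) p := by
  have hden : m * p + p ≠ 0 := by contrapose! h; linear_combination h
  have hnum : HasDerivAt (fun σ => σ + m * p) 1 p := (hasDerivAt_id' p).add_const _
  have hdenom : HasDerivAt (fun σ => m * σ + p) m p := by
    simpa using ((hasDerivAt_id' p).const_mul m).add_const p
  have hvalue : (p + m * p) / (m * p + p) = 1 := by rw [add_comm p, div_self hden]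
  refine ((hnum.div hdenom hden).log (by simp [hvalue])).congr_deriv ?_
  simp only [Pi.div_apply, hvalue, div_one]
  rw [show m * p + p = (1 + m) * p by ring]
  field_simp

theorem lax_mu_sq_pos {γ μsq : ℝ} (hγ : 1 < γ) (hμ : μsq = (γ - 1) / (γ + 1)) : 0 < μsq :=
  hμ ▸ div_pos (by linarith) (by linarith)

theorem mul_one_sub_lax_mu_sq {γ μsq : ℝ} (hγ : γ + 1 ≠ 0) (hμ : μsq = (γ - 1) / (γ + 1)) :
    γ * (1 - μsq) = 1 + μsq := by
  subst hμ
  field_simp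
  ring

theorem hasDerivAt_log_div_shock_density_rpow {γ pbar ρbar μsq : ℝ} (hγ : 1 < γ)
    (hpbar : 0 < pbar) (hρbar : 0 < ρbar) (hμ : μsq = (γ - 1) / (γ + 1)) :
    HasDerivAt (fun σ => log (σ / (ρbar * (σ + μsq * pbar) / (μsq * σ + pbar)) ^ γ)) 0 pbar := by
  have hμpos := lax_mu_sq_pos hγ hμ
  have hsplit : (fun σ => log (σ / (ρbar * (σ + μsq * pbar) / (μsq * σ + pbar)) ^ γ)) =ᶠ[𝓝 pbar]
      fun σ => log σ - γ * (log ρbar + log ((σ + μsq * pbar) / (μsq * σ + pbar))) := by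
    filter_upwards [Ioi_mem_nhds hpbar] with σ (hσ : 0 < σ)
    have hratio : 0 < (σ + μsq * pbar) / (μsq * σ + pbar) := by positivity
    rw [mul_div_assoc, log_div_rpow γ hσ (mul_pos hρbar hratio), log_mul hρbar.ne' hratio.ne']
  have hderiv := (hasDerivAt_log hpbar.ne').sub
    (((hasDerivAt_log_hugoniot_ratio (m := μsq) (by positivity)).const_add (log ρbar)).const_mul γ)
  refine (hderiv.congr_of_eventuallyEq hsplit).congr_deriv ?_
  rw [← mul_div_assoc, mul_one_sub_lax_mu_sq (by linarith) hμ]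
  field_simp
  ring

theorem entropy_deriv_along_lax3_general
    (γ cv s₀ pbar ρbar μsq : ℝ) (hγ : 1 < γ)
    (hpbar : 0 < pbar) (hρbar : 0 < ρbar) (hμ : μsq = (γ - 1) / (γ + 1))
    (φ : ℝ → ℝ)
    (hφ : ∀ σ : ℝ, φ σ =
      if σ ≤ pbar then ρbar * (σ / pbar) ^ (1 / γ)
      else ρbar * (σ + μsq * pbar) / (μsq * σ + pbar)) :
    HasDerivAt (fun σ => cv * Real.log (σ / φ σ ^ γ) + s₀) 0 pbar := by
  have hrarefaction : (fun σ => cv * log (σ / φ σ ^ γ) + s₀) =ᶠ[𝓝[≤] pbar]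
      fun _ => cv * log (pbar / ρbar ^ γ) + s₀ := by
    filter_upwards [self_mem_nhdsWithin, nhdsWithin_le_nhds (Ioi_mem_nhds hpbar)]
      with σ (hσle : σ ≤ pbar) (hσ : 0 < σ)
    rw [hφ, if_pos hσle, rarefaction_isentropic (by linarith) hpbar hρbar.le hσ]
  have hshock : (fun σ => cv * log (σ / φ σ ^ γ) + s₀) =ᶠ[𝓝[≥] pbar]
      fun σ => cv * log (σ / (ρbar * (σ + μsq * pbar) / (μsq * σ + pbar)) ^ γ) + s₀ := by
    filter_upwards [self_mem_nhdsWithin] with σ (hσ : pbar ≤ σ)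
    rcases hσ.eq_or_lt with rfl | hlt
    · have hsum : μsq * pbar + pbar ≠ 0 := by
        have := lax_mu_sq_pos hγ hμ
        positivity
      rw [hφ, if_pos le_rfl, div_self hpbar.ne', one_rpow, mul_one, mul_div_assoc,
        add_comm pbar, div_self hsum, mul_one]
    · rw [hφ, if_neg hlt.not_ge]
  have hshock_deriv := ((hasDerivAt_log_div_shock_density_rpow hγ hpbar hρbar hμ).const_mul cv)
    |>.add_const s₀
  exact hasDerivAt_of_eventuallyEq_Iic_Ici (hasDerivAt_const _ _)
    (hshock_deriv.congr_deriv (mul_zero cv)) hrarefaction hshock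

/-- The specific entropy s(σ) = c_v ln(σ/φ(σ)^γ) + s₀ along the
3-Lax curve of the polytropic Euler equations is differentiable at σ = p̄ with
derivative 0. -/
theorem entropy_deriv_along_lax3
    (γ cv s₀ pbar ρbar μsq : ℝ) (hγ : 1 < γ) (hcv : 0 < cv)
    (hpbar : 0 < pbar) (hρbar : 0 < ρbar) (hμ : μsq = (γ - 1) / (γ + 1))
    (φ : ℝ → ℝ)
    (hφ : ∀ σ : ℝ, φ σ =
      if σ ≤ pbar then ρbar * (σ / pbar) ^ (1 / γ)
      else ρbar * (σ + μsq * pbar) / (μsq * σ + pbar)) :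
    HasDerivAt (fun σ => cv * Real.log (σ / φ σ ^ γ) + s₀) 0 pbar :=
  entropy_deriv_along_lax3_general γ cv s₀ pbar ρbar μsq hγ hpbar hρbar hμ φ hφ
end
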